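/- In the ladder graph L_n = P_n □ K_2 (n ≥ 2), the difference R_{L_{n+1}}[(a_1,c_1),(a_{n+1},c_2)] − R_{L_n}[(a_1,c_1),(a_n,c_2)] is strictly greater than 1/4. -/

import Mathlib

open Matrix Finset

open Classical in
/-- The Moore–Penrose pseudoinverse of a real square matrix, defined via the
four Penrose conditions (it is unique when it exists). -/
noncomputable def Matrix.mpinv {m : Type*} [Fintype m] [DecidableEq m]
    (A : Matrix m m ℝ) : Matrix m m ℝ :=
  if h : ∃ B : Matrix m m ℝ,
      A * B * A = A ∧ B * A * B = B ∧ (A * B)ᵀ = A * B ∧ (B * A)ᵀ = B * A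
  then h.choose else 0

/-- Effective resistance between `u` and `v` with respect to a (weighted)
Laplacian matrix `L`:  `(e_u - e_v)ᵀ L⁺ (e_u - e_v)`. -/
noncomputable def effRes {m : Type*} [Fintype m] [DecidableEq m]
    (L : Matrix m m ℝ) (u v : m) : ℝ :=
  (Pi.single u 1 - Pi.single v 1) ⬝ᵥ (L.mpinv *ᵥ (Pi.single u 1 - Pi.single v 1))

/-- The (real) Laplacian matrix of a simple graph. -/
noncomputable def lapm {V : Type*} [Fintype V] [DecidableEq V]
    (G : SimpleGraph V) : Matrix V V ℝ :=
  letI := Classical.decRel G.Adj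
  G.lapMatrix ℝ

/-- Resistance distance between two vertices of a simple graph. -/
noncomputable def resDist {V : Type*} [Fintype V] [DecidableEq V]
    (G : SimpleGraph V) (u v : V) : ℝ :=
  effRes (lapm G) u v

/-- Resistance diameter of a simple graph. -/
noncomputable def resDiam {V : Type*} [Fintype V] [DecidableEq V]
    (G : SimpleGraph V) : ℝ :=
  ⨆ p : V × V, resDist G p.1 p.2

/-- The weighted Laplacian of the cone over `G` with apex `Sum.inr ()`:
edges of `G` have conductance `1` (unit resistance), and each vertex of `G`
is joined to the apex by an edge of conductance `m` (resistance `1/m`). -/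
noncomputable def coneLap {V : Type*} [Fintype V] [DecidableEq V]
    (G : SimpleGraph V) (m : ℝ) : Matrix (V ⊕ Unit) (V ⊕ Unit) ℝ :=
  letI := Classical.decRel G.Adj
  let W : Matrix (V ⊕ Unit) (V ⊕ Unit) ℝ := fun i j =>
    match i, j with
    | Sum.inl a, Sum.inl b => if G.Adj a b then 1 else 0
    | Sum.inl _, Sum.inr _ => m
    | Sum.inr _, Sum.inl _ => m
    | Sum.inr _, Sum.inr _ => 0
  Matrix.of fun i j => (if i = j then ∑ k, W i k else 0) - W i j

/-- The `k`-dimensional hypercube graph `Q_k`. -/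
def hypercube (k : ℕ) : SimpleGraph (Fin k → Bool) where
  Adj x y := (Finset.univ.filter fun i => x i ≠ y i).card = 1
  symm := by
    constructor
    intro x y h
    rw [← h]
    congr 1
    ext i
    simp [ne_comm]
  loopless := by constructor; intro x; simp

/-- The join `G + H` of two graphs on disjoint vertex sets. -/
def graphJoin {V W : Type*} (G : SimpleGraph V) (H : SimpleGraph W) :
    SimpleGraph (V ⊕ W) where
  Adj x y :=
    match x, y with
    | Sum.inl a, Sum.inl b => G.Adj a b
    | Sum.inr a, Sum.inr b => H.Adj a b
    | Sum.inl _, Sum.inr _ => True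
    | Sum.inr _, Sum.inl _ => True
  symm := by
    constructor
    rintro (a | a) (b | b) h
    · exact h.symm
    · trivial
    · trivial
    · exact h.symm
  loopless := by
    constructor
    rintro (a | a) h
    · exact G.loopless.irrefl a h
    · exact H.loopless.irrefl a h

/-!
Write `ℓ = n - 1`, so that `L_n` has rungs `0, …, ℓ`. For a symmetric `L` and any solution of
`L x = e_u - e_v`, the Penrose identity `L L⁺ L = L` gives `(e_u - e_v)ᵀ L⁺ (e_u - e_v) = xᵀ L x =
x u - x v`, so it suffices to exhibit the potential of a unit current from `(0, 0)` to `(ℓ, 1)`.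
On the bottom row it is `p k = ((α ^ k + α ^ (ℓ - k)) / D ℓ + ℓ / 2 - k) / 2`, and on the top row
`-p (ℓ - k)`, by the symmetry `(k, c) ↦ (ℓ - k, 1 - c)` of the ladder. The interior equations
hold because `α = 2 - √3` and `α⁻¹` are the roots of `t ^ 2 - 4 t + 1`, and
`D ℓ = 3 - α - (1 - α) α ^ ℓ` is forced by the equation at `(0, 0)`. This gives
`R(L_{ℓ+1}) = ℓ / 2 + (1 + α ^ ℓ) / D ℓ`, and the correction term lies in `(1/4, 1/2]` once
`ℓ ≥ 1`, so consecutive resistances differ by more than `1/2 + 1/4 - 1/2`.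
-/

open Matrix Finset SimpleGraph

theorem Matrix.IsSymm.exists_penrose {m : Type*} [Fintype m] [DecidableEq m]
    {A : Matrix m m ℝ} (hA : A.IsSymm) :
    ∃ B : Matrix m m ℝ,
      A * B * A = A ∧ B * A * B = B ∧ (A * B)ᵀ = A * B ∧ (B * A)ᵀ = B * A := by
  have hsa : IsSelfAdjoint A := by
    rw [IsSelfAdjoint, star_eq_conjTranspose, conjTranspose_eq_transpose_of_trivial]
    exact hA
  have hmul (f g : ℝ → ℝ) : cfc f A * cfc g A = cfc (fun x => f x * g x) A :=
    (cfc_mul f g A (A.finite_spectrum.continuousOn _) (A.finite_spectrum.continuousOn _)).symm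
  have hid : cfc (fun x : ℝ => x) A = A := cfc_id' ℝ A
  have hsymm (f : ℝ → ℝ) : (cfc f A)ᵀ = cfc f A := by
    rw [← conjTranspose_eq_transpose_of_trivial]
    exact cfc_predicate f A
  have hinv (x : ℝ) : x⁻¹ * x * x⁻¹ = x⁻¹ := by simpa using mul_inv_mul_cancel x⁻¹
  refine ⟨cfc (·⁻¹ : ℝ → ℝ) A, ?_, ?_, ?_, ?_⟩
  · nth_rw 1 3 4 [← hid]
    simp only [hmul, mul_inv_mul_cancel]
  · nth_rw 2 [← hid]
    simp only [hmul, hinv]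
  · nth_rw 1 3 [← hid]
    rw [hmul, hsymm]
  · nth_rw 2 4 [← hid]
    rw [hmul, hsymm]

theorem effRes_eq_sub_of_mulVec_eq {m : Type*} [Fintype m] [DecidableEq m]
    {L : Matrix m m ℝ} (hL : L.IsSymm) {x : m → ℝ} {u v : m}
    (hx : L *ᵥ x = Pi.single u 1 - Pi.single v 1) :
    effRes L u v = x u - x v := by
  have hLBL : L * L.mpinv * L = L := by
    rw [Matrix.mpinv, dif_pos hL.exists_penrose]
    exact hL.exists_penrose.choose_spec.1
  calc effRes L u v = (L *ᵥ x) ⬝ᵥ (L.mpinv *ᵥ (L *ᵥ x)) := by rw [effRes, hx]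
    _ = x ⬝ᵥ (L *ᵥ (L.mpinv *ᵥ (L *ᵥ x))) := by
      rw [dotProduct_mulVec x L, ← mulVec_transpose, hL.eq]
    _ = x ⬝ᵥ (L *ᵥ x) := by rw [mulVec_mulVec, mulVec_mulVec, hLBL]
    _ = x u - x v := by
      rw [hx, dotProduct_sub, dotProduct_single_one, dotProduct_single_one]

theorem lapm_eq_lapMatrix {V : Type*} [Fintype V] [DecidableEq V] (G : SimpleGraph V)
    [DecidableRel G.Adj] : lapm G = G.lapMatrix ℝ := by
  unfold lapm
  congr!

theorem isSymm_lapm {V : Type*} [Fintype V] [DecidableEq V] (G : SimpleGraph V) :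
    (lapm G).IsSymm := by
  classical
  rw [lapm_eq_lapMatrix]
  exact isSymm_lapMatrix ℝ G

theorem lapm_mulVec_apply {V : Type*} [Fintype V] [DecidableEq V] (G : SimpleGraph V)
    [DecidableRel G.Adj] (x : V → ℝ) (v : V) :
    (lapm G *ᵥ x) v = ∑ w ∈ G.neighborFinset v, (x v - x w) := by
  rw [lapm_eq_lapMatrix, lapMatrix_mulVec_apply, sum_sub_distrib, sum_const,
    card_neighborFinset_eq_degree, nsmul_eq_mul]

theorem lapm_boxProd_mulVec_apply {V W : Type*} [Fintype V] [DecidableEq V] [Fintype W]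
    [DecidableEq W] (G : SimpleGraph V) (H : SimpleGraph W) (x : V × W → ℝ) (v : V) (w : W) :
    (lapm (G □ H) *ᵥ x) (v, w) =
      (lapm G *ᵥ fun v' => x (v', w)) v + (lapm H *ᵥ fun w' => x (v, w')) w := by
  classical
  simp only [lapm_mulVec_apply]
  rw [neighborFinset_boxProd, sum_disjUnion, sum_product, sum_product]
  simp

theorem lapm_pathGraph_mulVec_apply (m : ℕ) (ψ : ℕ → ℝ) (k : Fin m) :
    (lapm (pathGraph m) *ᵥ fun l => ψ l) k =
      (if k.val + 1 < m then ψ k - ψ (k + 1) else 0) +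
        (if 0 < k.val then ψ k - ψ (k - 1) else 0) := by
  classical
  have hsplit (i : ℕ) : (if k.val + 1 = i ∨ i + 1 = k.val then ψ k - ψ i else 0) =
      (if k.val + 1 = i then ψ k - ψ i else 0) +
        (if 0 < k.val then (if k.val - 1 = i then ψ k - ψ i else 0) else 0) := by
    by_cases h : k.val + 1 = i <;> by_cases h0 : 0 < k.val <;> by_cases h' : k.val - 1 = i <;>
      simp [h, h0, h'] <;> omega
  rw [lapm_mulVec_apply, neighborFinset_eq_filter, sum_filter]
  simp only [pathGraph_adj]
  rw [Fin.sum_univ_eq_sum_range (fun l => if k.val + 1 = l ∨ l + 1 = k.val then ψ k - ψ l else 0),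
    sum_congr rfl fun i _ => hsplit i, sum_add_distrib, sum_ite_irrel, sum_ite_eq, sum_ite_eq,
    sum_const_zero]
  simp [k.isLt, Nat.sub_lt_of_lt]

theorem lapm_pathGraph_two_mulVec_apply (y : Fin 2 → ℝ) (c : Fin 2) :
    (lapm (pathGraph 2) *ᵥ y) c = y c - y (1 - c) := by
  classical
  rw [lapm_mulVec_apply, neighborFinset_eq_filter, sum_filter]
  fin_cases c <;> simp [pathGraph_adj, Fin.sum_univ_two]

noncomputable def ladderRatio : ℝ := 2 - √3

local notation "α" => ladderRatio

theorem ladderRatio_pos : 0 < α := by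
  have := Real.sq_sqrt (show (0 : ℝ) ≤ 3 by norm_num)
  have := Real.sqrt_nonneg 3
  unfold ladderRatio
  nlinarith

theorem ladderRatio_lt_one : α < 1 := by
  have := Real.sq_sqrt (show (0 : ℝ) ≤ 3 by norm_num)
  have := Real.sqrt_nonneg 3
  unfold ladderRatio
  nlinarith

theorem ladderRatio_sq : α ^ 2 = 4 * α - 1 := by
  have := Real.sq_sqrt (show (0 : ℝ) ≤ 3 by norm_num)
  unfold ladderRatio
  linear_combination this

noncomputable def ladderDenom (ℓ : ℕ) : ℝ := 3 - α - (1 - α) * α ^ ℓ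

theorem ladderDenom_pos (ℓ : ℕ) : 0 < ladderDenom ℓ := by
  have hpow : α ^ ℓ ≤ 1 := pow_le_one₀ ladderRatio_pos.le ladderRatio_lt_one.le
  have := ladderRatio_lt_one
  unfold ladderDenom
  nlinarith

noncomputable def ladderProfile (ℓ k : ℕ) : ℝ :=
  ((α ^ k + α ^ (ℓ - k)) / ladderDenom ℓ + ((ℓ : ℝ) / 2 - k)) / 2

theorem ladderProfile_eq {ℓ k : ℕ} (hk : k ≤ ℓ) :
    (if k < ℓ then ladderProfile ℓ k - ladderProfile ℓ (k + 1) else 0) +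
      (if 0 < k then ladderProfile ℓ k - ladderProfile ℓ (k - 1) else 0) +
      (ladderProfile ℓ k + ladderProfile ℓ (ℓ - k)) = if k = 0 then 1 else 0 := by
  have hD : (ladderDenom ℓ)⁻¹ * (3 - α - (1 - α) * α ^ ℓ) = 1 :=
    inv_mul_cancel₀ (ladderDenom_pos ℓ).ne'
  simp only [ladderProfile, div_eq_mul_inv _ (ladderDenom ℓ)]
  generalize (ladderDenom ℓ)⁻¹ = c at hD ⊢
  have hα := ladderRatio_sq
  rcases Nat.eq_zero_or_pos k with rfl | hk0
  · rcases Nat.eq_zero_or_pos ℓ with rfl | hℓ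
    · rw [if_neg (lt_irrefl 0), if_neg (lt_irrefl 0), if_pos rfl]
      push_cast
      linear_combination hD
    · obtain ⟨j, rfl⟩ : ∃ j, ℓ = j + 1 := ⟨ℓ - 1, by omega⟩
      rw [if_pos hℓ, if_neg (lt_irrefl 0), if_pos rfl]
      simp only [Nat.sub_zero, zero_add, Nat.add_sub_cancel, Nat.sub_self]
      push_cast
      linear_combination (-(c * α ^ j) / 2) * hα + hD / 2
  · rcases hk.lt_or_eq with hkℓ | rfl
    · obtain ⟨i, rfl⟩ : ∃ i, k = i + 1 := ⟨k - 1, by omega⟩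
      obtain ⟨j, rfl⟩ : ∃ j, ℓ = i + 2 + j := ⟨ℓ - i - 2, by omega⟩
      rw [if_pos hkℓ, if_pos hk0, if_neg (Nat.succ_ne_zero i), Nat.add_sub_cancel,
        show i + 2 + j - (i + 1) = j + 1 by omega, show i + 2 + j - (i + 1 + 1) = j by omega,
        show i + 2 + j - i = j + 2 by omega, show i + 2 + j - (j + 1) = i + 1 by omega]
      push_cast
      linear_combination (-(c * (α ^ i + α ^ j)) / 2) * hα
    · obtain ⟨j, rfl⟩ : ∃ j, k = j + 1 := ⟨k - 1, by omega⟩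
      rw [if_neg (lt_irrefl _), if_pos hk0, if_neg (Nat.succ_ne_zero j)]
      simp only [Nat.sub_zero, Nat.add_sub_cancel, Nat.sub_self, Nat.add_sub_cancel_left]
      push_cast
      linear_combination (-(c * α ^ j) / 2) * hα + hD / 2

theorem ladderProfile_eq_reflect {ℓ k : ℕ} (hk : k ≤ ℓ) :
    (if k < ℓ then -ladderProfile ℓ (ℓ - k) - -ladderProfile ℓ (ℓ - (k + 1)) else 0) +
      (if 0 < k then -ladderProfile ℓ (ℓ - k) - -ladderProfile ℓ (ℓ - (k - 1)) else 0) +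
      (-ladderProfile ℓ (ℓ - k) - ladderProfile ℓ k) = -if k = ℓ then 1 else 0 := by
  obtain ⟨j, rfl⟩ : ∃ j, ℓ = k + j := ⟨ℓ - k, by omega⟩
  have h := ladderProfile_eq (Nat.le_add_left j k)
  rw [Nat.add_sub_cancel] at h
  rw [Nat.add_sub_cancel_left, show k + j - (k + 1) = j - 1 by omega]
  split_ifs at h ⊢ <;> (try rw [show k + j - (k - 1) = j + 1 by omega]) <;> first | omega | linarith

noncomputable def ladderPotential (ℓ : ℕ) : Fin (ℓ + 1) × Fin 2 → ℝ :=
  fun z => if z.2 = 0 then ladderProfile ℓ z.1 else -ladderProfile ℓ (ℓ - z.1)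

theorem lapm_ladder_mulVec_ladderPotential (ℓ : ℕ) :
    lapm ((pathGraph (ℓ + 1)).boxProd (pathGraph 2)) *ᵥ ladderPotential ℓ =
      Pi.single (⟨0, ℓ.succ_pos⟩, 0) 1 - Pi.single (⟨ℓ, ℓ.lt_succ_self⟩, 1) 1 := by
  funext ⟨k, c⟩
  have hk : k.val ≤ ℓ := Nat.lt_succ_iff.mp k.isLt
  rw [lapm_boxProd_mulVec_apply, lapm_pathGraph_two_mulVec_apply]
  fin_cases c
  · show (lapm _ *ᵥ fun l : Fin (ℓ + 1) => ladderProfile ℓ l) k +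
        (ladderProfile ℓ k - -ladderProfile ℓ (ℓ - k)) = _
    simp only [lapm_pathGraph_mulVec_apply, Nat.add_lt_add_iff_right, sub_neg_eq_add,
      ladderProfile_eq hk, Pi.sub_apply, Pi.single_apply, Prod.mk.injEq, Fin.ext_iff,
      Fin.val_zero, Fin.val_one, zero_ne_one, and_true, and_false, if_false, sub_zero]
  · show (lapm _ *ᵥ fun l : Fin (ℓ + 1) => -ladderProfile ℓ (ℓ - l)) k +
        (-ladderProfile ℓ (ℓ - k) - ladderProfile ℓ k) = _
    simp only [lapm_pathGraph_mulVec_apply (ψ := fun l => -ladderProfile ℓ (ℓ - l)),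
      Nat.add_lt_add_iff_right, ladderProfile_eq_reflect hk, Pi.sub_apply, Pi.single_apply,
      Prod.mk.injEq, Fin.ext_iff, Fin.val_zero, Fin.val_one, one_ne_zero, and_true, and_false,
      if_false, zero_sub]

noncomputable def ladderCorrection (ℓ : ℕ) : ℝ := (1 + α ^ ℓ) / ladderDenom ℓ

theorem resDist_ladder (ℓ : ℕ) :
    resDist ((pathGraph (ℓ + 1)).boxProd (pathGraph 2)) (⟨0, ℓ.succ_pos⟩, 0)
        (⟨ℓ, ℓ.lt_succ_self⟩, 1) = ℓ / 2 + ladderCorrection ℓ := by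
  rw [resDist, effRes_eq_sub_of_mulVec_eq (isSymm_lapm _) (lapm_ladder_mulVec_ladderPotential ℓ)]
  show ladderProfile ℓ 0 - -ladderProfile ℓ (ℓ - ℓ) = _
  rw [Nat.sub_self, ladderProfile, ladderCorrection, Nat.sub_zero, pow_zero]
  push_cast
  ring

theorem quarter_lt_ladderCorrection (ℓ : ℕ) : 1 / 4 < ladderCorrection ℓ := by
  rw [ladderCorrection, div_lt_div_iff₀ four_pos (ladderDenom_pos ℓ)]
  have hα := ladderRatio_lt_one
  have hpow := pow_pos ladderRatio_pos ℓ
  unfold ladderDenom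
  nlinarith [mul_pos hpow (sub_pos.2 hα), ladderRatio_pos]

theorem ladderCorrection_le_half {ℓ : ℕ} (hℓ : 1 ≤ ℓ) : ladderCorrection ℓ ≤ 1 / 2 := by
  rw [ladderCorrection, div_le_div_iff₀ (ladderDenom_pos ℓ) two_pos]
  have hpow : α ^ ℓ ≤ α := by
    simpa using pow_le_pow_of_le_one ladderRatio_pos.le ladderRatio_lt_one.le hℓ
  have hα := ladderRatio_lt_one
  unfold ladderDenom
  nlinarith [ladderRatio_sq, mul_le_mul_of_nonneg_right hpow (by linarith : (0 : ℝ) ≤ 3 - α)]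

/-- The successive differences of diagonal resistance distances in ladder graphs
exceed `1/4`. -/
theorem resDist_ladder_diff_gt (n : ℕ) (hn : 2 ≤ n) :
    resDist ((SimpleGraph.pathGraph (n + 1)).boxProd (SimpleGraph.pathGraph 2))
        (⟨0, by omega⟩, 0) (⟨n, by omega⟩, 1)
      - resDist ((SimpleGraph.pathGraph n).boxProd (SimpleGraph.pathGraph 2))
          (⟨0, by omega⟩, 0) (⟨n - 1, by omega⟩, 1)
      > 1 / 4 := by
  obtain ⟨ℓ, rfl⟩ : ∃ ℓ, n = ℓ + 1 := ⟨n - 1, by omega⟩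
  simp only [Nat.add_sub_cancel]
  rw [resDist_ladder, resDist_ladder]
  have hlower := quarter_lt_ladderCorrection (ℓ + 1)
  have hupper := ladderCorrection_le_half (show 1 ≤ ℓ by omega)
  push_cast
  linarith
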